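/- arXiv:1305.3062 — 5 statements merged into one kernel-verified Lean document; each statement's English description precedes it below -/
import Mathlib

section
/- Let N = k·2^n + 1 be a Proth number (k, n positive integers with k < 2^n). If there exists an integer a such that a^((N-1)/2) ≡ -1 (mod N), then N is prime. -/
/-- Proth's theorem (sufficiency): if `N = k·2^n + 1` with `0 < k`, `0 < n`, `k < 2^n`,
and some integer `a` satisfies `a^((N-1)/2) ≡ -1 (mod N)`, then `N` is prime. -/
theorem proth_sufficiency (k n : ℕ) (hk : 0 < k) (hn : 0 < n) (hkn : k < 2 ^ n)
    (N : ℕ) (hN : N = k * 2 ^ n + 1) (a : ℤ)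
    (ha : (a : ZMod N) ^ ((N - 1) / 2) = -1) : N.Prime := by
  have h2n : (2:ℕ) ≤ 2 ^ n := by
    calc (2:ℕ) = 2^1 := rfl
    _ ≤ 2^n := Nat.pow_le_pow_right (by norm_num) hn
  have hN1 : 1 < N := by
    have : 2 ≤ k * 2 ^ n := le_trans h2n (Nat.le_mul_of_pos_left _ hk)
    omega
  -- N is odd
  have hNodd : Odd N := by
    rw [hN]
    exact (even_iff_two_dvd.mpr (Dvd.dvd.mul_left (dvd_pow_self 2 hn.ne') k)).add_one
  set p := N.minFac with hp
  have hpprime : p.Prime := Nat.minFac_prime hN1.ne'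
  haveI : Fact p.Prime := ⟨hpprime⟩
  have hpdvd : p ∣ N := N.minFac_dvd
  have hp2 : p ≠ 2 := by
    rintro h
    rw [h] at hpdvd
    exact (Nat.not_even_iff_odd.mpr hNodd) (even_iff_two_dvd.mpr hpdvd)
  have hp3 : 2 < p := lt_of_le_of_ne hpprime.two_le (Ne.symm hp2)
  haveI : Fact (2 < p) := ⟨hp3⟩
  -- map to ZMod p
  let f := ZMod.castHom hpdvd (ZMod p)
  have ha' : ((a : ZMod p)) ^ ((N-1)/2) = -1 := by
    have := congrArg f ha
    simpa using this
  have hhalf : (N - 1) / 2 = k * 2 ^ (n - 1) := by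
    have h : N - 1 = k * 2 ^ (n - 1) * 2 := by
      rw [hN, Nat.add_sub_cancel, show (2:ℕ) ^ n = 2 ^ (n-1) * 2 from by
        rw [← pow_succ]; congr 1; omega]
      ring
    rw [h, Nat.mul_div_cancel _ two_pos]
  set b : ZMod p := (a : ZMod p) ^ k with hb
  have hbpow : b ^ 2 ^ (n - 1) = -1 := by
    rw [hb, ← pow_mul, ← hhalf, ha']
  have hbpow2 : b ^ 2 ^ n = 1 := by
    have : 2 ^ n = 2 ^ (n - 1) * 2 := by
      rw [← pow_succ]
      congr 1
      omega
    rw [this, pow_mul, hbpow]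
    ring
  have hne : b ^ 2 ^ (n-1) ≠ 1 := by
    rw [hbpow]
    exact ZMod.neg_one_ne_one
  have horder : orderOf b = 2 ^ n := by
    have hn' : n = (n - 1) + 1 := by omega
    rw [hn']
    exact orderOf_eq_prime_pow hne (by rw [← hn']; exact hbpow2)
  have hb0 : b ≠ 0 := by
    intro h
    rw [h] at hbpow
    simp at hbpow
  have hdvd : 2 ^ n ∣ p - 1 := by
    rw [← horder]
    exact orderOf_dvd_of_pow_eq_one (ZMod.pow_card_sub_one_eq_one hb0)
  have hple : 2 ^ n + 1 ≤ p := by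
    have := Nat.le_of_dvd (by omega) hdvd
    omega
  by_contra hcon
  have hsq := Nat.minFac_sq_le_self (by omega) hcon
  have : (2^n + 1)^2 ≤ N := le_trans (Nat.pow_le_pow_left hple 2) hsq
  have hlt : k * 2^n < 2^n * 2^n :=
    Nat.mul_lt_mul_of_pos_right hkn (by positivity)
  nlinarith [this, hlt, hN]
end

section
/- Let N be an odd natural number with N - 1 = F·R where gcd(F, R) = 1 and F > √N. If there exists an integer a with a^(N-1) ≡ 1 (mod N) and gcd(a^((N-1)/q) - 1, N) = 1 for every prime q dividing F, then N is prime. -/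
/-!
If `N` were composite it would have a prime factor `p ≤ √N`. Modulo `p`, the element `a ^ R`
satisfies `(a ^ R) ^ F = a ^ (N - 1) = 1`, while for every prime `q ∣ F` the power
`(a ^ R) ^ (F / q) = a ^ ((N - 1) / q)` is not `1`, because `a ^ ((N - 1) / q) - 1` is prime to `N`.
Hence `a ^ R` has order exactly `F` in `(ZMod p)ˣ`, so `F ∣ p - 1` and `F < p ≤ √N`.
-/

theorem orderOf_pow_eq_of_pow_div_prime_ne_one {G : Type*} [Monoid G] {x : G} {F R : ℕ}
    (hF : 0 < F) (hx : x ^ (F * R) = 1)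
    (hq : ∀ q : ℕ, q.Prime → q ∣ F → x ^ (F * R / q) ≠ 1) :
    orderOf (x ^ R) = F := by
  refine orderOf_eq_of_pow_and_pow_div_prime hF (by rwa [← pow_mul, mul_comm]) fun q hq' hqF ↦ ?_
  rw [← pow_mul, mul_comm, Nat.div_mul_right_comm hqF]
  exact hq q hq' hqF

theorem intCast_zmod_ne_one_of_gcd_sub_one_eq_one {b : ℤ} {N p : ℕ} (hp : p.Prime)
    (hpN : p ∣ N) (hb : Int.gcd (b - 1) N = 1) : (b : ZMod p) ≠ 1 := by
  intro hb1
  have hpb : (p : ℤ) ∣ b - 1 := by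
    rw [← ZMod.intCast_zmod_eq_zero_iff_dvd, Int.cast_sub, hb1, Int.cast_one, sub_self]
  have : p ∣ Int.gcd (b - 1) N := Int.natCast_dvd_natCast.mp <|
    Int.dvd_coe_gcd hpb (Int.natCast_dvd_natCast.mpr hpN)
  exact hp.one_lt.ne' (Nat.dvd_one.mp (hb ▸ this))

theorem dvd_sub_one_of_pocklington {N F R p : ℕ} (hp : p.Prime) (hpN : p ∣ N) (hF : 0 < F)
    (hFR : N - 1 = F * R) {a : ℤ} (ha : (a : ZMod N) ^ (N - 1) = 1)
    (hq : ∀ q : ℕ, q.Prime → q ∣ F → Int.gcd (a ^ ((N - 1) / q) - 1) N = 1) :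
    F ∣ p - 1 := by
  have : Fact p.Prime := ⟨hp⟩
  have hap : (a : ZMod p) ^ (F * R) = 1 := by
    have := congrArg (ZMod.castHom hpN (ZMod p)) ha
    rwa [map_pow, map_intCast, map_one, hFR] at this
  have hord : orderOf ((a : ZMod p) ^ R) = F :=
    orderOf_pow_eq_of_pow_div_prime_ne_one hF hap fun q hq' hqF ↦ by
      simpa [← hFR] using intCast_zmod_ne_one_of_gcd_sub_one_eq_one hp hpN (hq q hq' hqF)
  have hne : (a : ZMod p) ^ R ≠ 0 := fun h0 ↦ by
    simp [pow_mul', h0, zero_pow hF.ne'] at hap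
  exact hord ▸ ZMod.orderOf_dvd_card_sub_one hne

/-- Pocklington's primality criterion: let `N` be odd with `N - 1 = F·R`,
`gcd(F,R) = 1` and `F > √N`. If some integer `a` satisfies `a^(N-1) ≡ 1 (mod N)` and
`gcd(a^((N-1)/q) - 1, N) = 1` for every prime `q ∣ F`, then `N` is prime. -/
theorem pocklington (N F R : ℕ) (hodd : Odd N) (hFR : N - 1 = F * R)
    (hgcd : Nat.gcd F R = 1) (hF : (F : ℝ) > Real.sqrt N) (a : ℤ)
    (ha : (a : ZMod N) ^ (N - 1) = 1)
    (hq : ∀ q : ℕ, q.Prime → q ∣ F → Int.gcd (a ^ ((N - 1) / q) - 1) N = 1) :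
    N.Prime := by
  have hNF : N < F ^ 2 := by
    exact_mod_cast (Real.sqrt_lt' ((Real.sqrt_nonneg _).trans_lt hF)).mp hF
  have hFpos : 0 < F := Nat.pos_of_ne_zero (by rintro rfl; simp at hNF)
  have hN1 : N ≠ 1 := by
    rintro rfl
    have hR : R = 0 := by simpa [hFpos.ne'] using hFR.symm
    rw [hR, Nat.gcd_zero_right] at hgcd
    simp [hgcd] at hNF
  by_contra hNp
  have hNpos : 0 < N := hodd.pos
  have hp := Nat.minFac_prime hN1
  have hpF : F ∣ N.minFac - 1 :=
    dvd_sub_one_of_pocklington hp (Nat.minFac_dvd N) hFpos hFR ha hq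
  have hFp : F < N.minFac := by
    have := Nat.le_of_dvd (Nat.sub_pos_of_lt hp.one_lt) hpF
    omega
  have := Nat.minFac_sq_le_self hNpos hNp
  have := Nat.pow_lt_pow_left hFp two_ne_zero
  omega
end

section
/- Let N = k·2^n + 1 with k odd, k < 2^n, n ≥ 2, and suppose a is an integer with a^((N-1)/2) ≡ -1 (mod N). Then the multiplicative order of a modulo any prime divisor p of N is divisible by 2^n. -/
/-! If `a ^ (k * 2 ^ m) = -1` modulo a prime `p ∣ N`, then `a ^ k` squares `m + 1` times to `1`
but only `m` times to `-1 ≠ 1`, so it has order exactly `2 ^ (m + 1)`, and the order of a power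
divides the order of `a`. -/

theorem pow_succ_dvd_orderOf_of_pow_mul_pow {G : Type*} [Monoid G] {x : G} {p k n : ℕ}
    [Fact p.Prime] (hne : x ^ (k * p ^ n) ≠ 1) (heq : x ^ (k * p ^ (n + 1)) = 1) :
    p ^ (n + 1) ∣ orderOf x := by
  rw [pow_mul] at hne heq
  exact orderOf_eq_prime_pow hne heq ▸ orderOf_pow_dvd k

theorem two_pow_succ_dvd_orderOf_of_pow_eq_neg_one {M : Type*} [Monoid M] [HasDistribNeg M]
    {x : M} {k n : ℕ} (hM : (-1 : M) ≠ 1) (hx : x ^ (k * 2 ^ n) = -1) :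
    2 ^ (n + 1) ∣ orderOf x := by
  refine pow_succ_dvd_orderOf_of_pow_mul_pow (hx ▸ hM) ?_
  rw [pow_succ, ← mul_assoc, pow_mul, hx, neg_one_sq]

theorem proth_order_div_general (k n N : ℕ)
    (hN : N = k * 2 ^ n + 1) (a : ℤ)
    (ha : (a : ZMod N) ^ ((N - 1) / 2) = -1) :
    ∀ p : ℕ, p.Prime → p ∣ N → 2 ^ n ∣ orderOf (a : ZMod p) := by
  intro p hp hpN
  cases n with
  | zero => exact one_dvd _
  | succ m =>
  have hhalf : (N - 1) / 2 = k * 2 ^ m := by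
    rw [hN, Nat.add_sub_cancel, pow_succ, ← mul_assoc, Nat.mul_div_cancel _ two_pos]
  have hap : (a : ZMod p) ^ (k * 2 ^ m) = -1 := by
    simpa only [map_pow, map_neg, map_one, map_intCast, hhalf] using
      congrArg (ZMod.castHom hpN (ZMod p)) ha
  have hp2 : p ≠ 2 := by
    rintro rfl
    rw [hN, pow_succ, ← mul_assoc] at hpN
    omega
  have : Fact (2 < p) := ⟨lt_of_le_of_ne hp.two_le hp2.symm⟩
  exact two_pow_succ_dvd_orderOf_of_pow_eq_neg_one ZMod.neg_one_ne_one hap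

/-- Key step in Proth's theorem: if `N = k·2^n + 1` with `k` odd, `k < 2^n`, `n ≥ 2`,
and `a^((N-1)/2) ≡ -1 (mod N)`, then for every prime `p ∣ N` the multiplicative order
of `a` mod `p` is divisible by `2^n`. -/
theorem proth_order_div (k n N : ℕ) (hk : Odd k) (hkn : k < 2 ^ n) (hn : 2 ≤ n)
    (hN : N = k * 2 ^ n + 1) (a : ℤ)
    (ha : (a : ZMod N) ^ ((N - 1) / 2) = -1) :
    ∀ p : ℕ, p.Prime → p ∣ N → 2 ^ n ∣ orderOf (a : ZMod p) :=
  proth_order_div_general k n N hN a ha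
end

section
/- If N = k·2^n + 1 is composite with k < 2^n, then N has a prime divisor p with p < 2^n + 1, and hence p ≢ 1 (mod 2^n); that is, a composite Proth number has a prime divisor p with p ≢ 1 (mod 2^n). -/
/-- A composite Proth number `N = k·2^n + 1` (`k < 2^n`) has a prime divisor
`p < 2^n + 1`, and hence a prime divisor with `p ≢ 1 (mod 2^n)`. -/
theorem composite_proth_divisor (k n N : ℕ) (hk : 0 < k) (hn : 0 < n) (hkn : k < 2 ^ n)
    (hN : N = k * 2 ^ n + 1) (hcomp : ¬ N.Prime) :
    ∃ p : ℕ, p.Prime ∧ p ∣ N ∧ p < 2 ^ n + 1 ∧ p % 2 ^ n ≠ 1 := by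
  have h2 : 2 ≤ 2 ^ n := Nat.one_lt_two_pow_iff.mpr hn.ne'
  have hN1 : 1 < N := by
    subst hN
    have : 1 * 2 ≤ k * 2 ^ n := Nat.mul_le_mul hk h2
    omega
  set p := N.minFac with hp
  have hpp : p.Prime := N.minFac_prime hN1.ne'
  have hdvd : p ∣ N := N.minFac_dvd
  have hsq : p * p ≤ N := by
    have := Nat.minFac_sq_le_self (by omega) hcomp
    simpa [pow_two] using this
  have hlt : p < 2 ^ n + 1 := by
    by_contra h
    push_neg at h
    have : (2 ^ n + 1) * (2 ^ n + 1) ≤ p * p := Nat.mul_le_mul h h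
    have hub : N < (2 ^ n + 1) * (2 ^ n + 1) := by
      subst hN
      have : k * 2 ^ n ≤ (2 ^ n - 1) * 2 ^ n := Nat.mul_le_mul_right _ (by omega)
      nlinarith [Nat.one_le_two_pow (n := n)]
    omega
  refine ⟨p, hpp, hdvd, hlt, ?_⟩
  rcases lt_or_eq_of_le (Nat.lt_succ_iff.mp hlt) with h | h
  · rw [Nat.mod_eq_of_lt h]
    exact hpp.one_lt.ne'
  · rw [h, Nat.mod_self]
    omega
end

section
/- Suppose every even integer m with 4 ≤ m ≤ 4·10^18 is a sum of two primes, and let T = 8875694145621773516800000000000. If there exist primes p₁ < ... < p_m with p₁ ≤ 4·10^18, p_m ≥ T - 4·10^18 and consecutive gaps p_{i+1} - p_i ≤ 4·10^18, then every odd n with 7 ≤ n ≤ T is a sum of three primes. -/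
/-!
Write `N = 4·10^18`. An odd `n ≤ N + 6` is `3` plus an even number that is at most `N + 3`.
For larger `n`, the ladder gives a prime `q ≤ n - 3` with `n - 3 ≤ q + N`; since `q` is odd,
`n - q` is even and lies in `[4, N + 3]`. Binary Goldbach up to `N` covers this range except
for `N + 2 = 13291 + 3999999999999986711`; the larger prime has a Lucas certificate with
witness `7`.
-/

def IsSumOfTwoPrimes (m : ℕ) : Prop :=
  ∃ p q : ℕ, p.Prime ∧ q.Prime ∧ p + q = m

def GoldbachUpTo (N : ℕ) : Prop :=
  ∀ m : ℕ, 4 ≤ m → m ≤ N → Even m → IsSumOfTwoPrimes m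

theorem GoldbachUpTo.add_three {N : ℕ} (hN : Even N) (h : GoldbachUpTo N)
    (h2 : IsSumOfTwoPrimes (N + 2)) : GoldbachUpTo (N + 3) := by
  intro m h4 hm heven
  obtain hle | rfl | hgt : m ≤ N ∨ m = N + 2 ∨ (m = N + 1 ∨ m = N + 3) := by omega
  · exact h m h4 hle heven
  · exact h2
  · rcases hgt with rfl | rfl <;> simp [Nat.even_add_one, hN] at heven

theorem lucas_primality_of_list_prod {p a : ℕ} (L : List ℕ) (hL : ∀ q ∈ L, q.Prime)
    (hprod : L.prod = p - 1) (ha : (a : ZMod p) ^ (p - 1) = 1)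
    (hord : ∀ q ∈ L, (a : ZMod p) ^ ((p - 1) / q) ≠ 1) : p.Prime := by
  refine lucas_primality p a ha fun q hq hdvd => hord q ?_
  rw [← hprod] at hdvd
  exact mem_list_primes_of_dvd_prod hq.prime (fun r hr => (hL r hr).prime) hdvd

theorem prime_3999999999999986711 : Nat.Prime 3999999999999986711 := by
  refine lucas_primality_of_list_prod (a := 7) [2, 5, 7, 13, 233, 541, 38933, 895669]
    (by norm_num) (by norm_num) (by norm_num; reduce_mod_char) ?_
  simp only [List.forall_mem_cons, List.not_mem_nil, IsEmpty.forall_iff, implies_true, and_true]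
  refine ⟨?_, ?_, ?_, ?_, ?_, ?_, ?_, ?_⟩ <;> (norm_num; reduce_mod_char; decide)

theorem isSumOfTwoPrimes_4000000000000000002 : IsSumOfTwoPrimes (4 * 10 ^ 18 + 2) :=
  ⟨13291, 3999999999999986711, by norm_num, prime_3999999999999986711, by norm_num⟩

theorem exists_prime_le_le_add_of_gap_le {N T m : ℕ} {p : ℕ → ℕ} (hm : 1 ≤ m)
    (hprime : ∀ i, i < m → (p i).Prime) (hgap : ∀ i, i + 1 < m → p (i + 1) - p i ≤ N)
    (hlast : p (m - 1) ≥ T - N) {x : ℕ} (hfirst : p 0 ≤ x) (hxT : x ≤ T) :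
    ∃ q, q.Prime ∧ q ≤ x ∧ x ≤ q + N := by
  set i := Nat.findGreatest (fun j => p j ≤ x) (m - 1)
  have hi : i ≤ m - 1 := Nat.findGreatest_le _
  have hpi : p i ≤ x := Nat.findGreatest_spec (P := fun j => p j ≤ x) (Nat.zero_le _) hfirst
  refine ⟨p i, hprime i (by omega), hpi, ?_⟩
  rcases hi.eq_or_lt with hi_last | hlt
  · rw [hi_last] at hpi ⊢
    omega
  · have hnext : ¬ p (i + 1) ≤ x :=
      Nat.findGreatest_is_greatest (P := fun j => p j ≤ x) (Nat.lt_succ_self i) hlt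
    have := hgap i (by omega)
    omega

theorem ternary_goldbach_of_prime_cover {N T : ℕ} (hbin : GoldbachUpTo (N + 3))
    (hcover : ∀ x, N ≤ x → x ≤ T → ∃ q, q.Prime ∧ q ≤ x ∧ x ≤ q + N)
    {n : ℕ} (h7 : 7 ≤ n) (hnT : n ≤ T) (hodd : Odd n) :
    ∃ a b c : ℕ, a.Prime ∧ b.Prime ∧ c.Prime ∧ a + b + c = n := by
  by_cases hsmall : n ≤ N + 6
  · obtain ⟨a, b, ha, hb, hab⟩ :=
      hbin (n - 3) (by omega) (by omega) (Nat.Odd.sub_odd hodd (by decide))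
    exact ⟨a, b, 3, ha, hb, Nat.prime_three, by omega⟩
  obtain ⟨q, hq, hqx, hxq⟩ := hcover (n - 3) (by omega) (by omega)
  have hqodd : Odd q := hq.odd_of_ne_two (by omega)
  obtain ⟨k, hk⟩ : Even (n - q) := Nat.Odd.sub_odd hodd hqodd
  obtain ⟨a, b, ha, hb, hab⟩ := hbin (n - q) (by omega) (by omega) ⟨k, hk⟩
  exact ⟨a, b, q, ha, hb, hq, by omega⟩

theorem ternary_goldbach_up_to_T_general
    (hbin : ∀ m : ℕ, 4 ≤ m → m ≤ 4 * 10 ^ 18 → Even m →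
      ∃ p q : ℕ, p.Prime ∧ q.Prime ∧ p + q = m)
    (m : ℕ) (hm : 1 ≤ m) (p : ℕ → ℕ)
    (hprime : ∀ i, i < m → (p i).Prime)
    (hgap : ∀ i, i + 1 < m → p (i + 1) - p i ≤ 4 * 10 ^ 18)
    (hfirst : p 0 ≤ 4 * 10 ^ 18)
    (hlast : p (m - 1) ≥ 8875694145621773516800000000000 - 4 * 10 ^ 18) :
    ∀ n : ℕ, 7 ≤ n → n ≤ 8875694145621773516800000000000 → Odd n →
      ∃ a b c : ℕ, a.Prime ∧ b.Prime ∧ c.Prime ∧ a + b + c = n := by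
  have hbin₃ : GoldbachUpTo (4 * 10 ^ 18 + 3) :=
    GoldbachUpTo.add_three (by decide) hbin isSumOfTwoPrimes_4000000000000000002
  intro n h7 hnT hodd
  exact ternary_goldbach_of_prime_cover hbin₃
    (fun _ hx hxT => exists_prime_le_le_add_of_gap_le hm hprime hgap hlast (hfirst.trans hx) hxT)
    h7 hnT hodd

/-- Main theorem skeleton: binary Goldbach verified up to `4·10^18` together with a
prime ladder of rung width at most `4·10^18` reaching past `T - 4·10^18` yields
ternary Goldbach for all odd `7 ≤ n ≤ T`, `T = 8875694145621773516800000000000`. -/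
theorem ternary_goldbach_up_to_T
    (hbin : ∀ m : ℕ, 4 ≤ m → m ≤ 4 * 10 ^ 18 → Even m →
      ∃ p q : ℕ, p.Prime ∧ q.Prime ∧ p + q = m)
    (m : ℕ) (hm : 1 ≤ m) (p : ℕ → ℕ)
    (hprime : ∀ i, i < m → (p i).Prime)
    (hmono : ∀ i, i + 1 < m → p i < p (i + 1))
    (hgap : ∀ i, i + 1 < m → p (i + 1) - p i ≤ 4 * 10 ^ 18)
    (hfirst : p 0 ≤ 4 * 10 ^ 18)
    (hlast : p (m - 1) ≥ 8875694145621773516800000000000 - 4 * 10 ^ 18) :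
    ∀ n : ℕ, 7 ≤ n → n ≤ 8875694145621773516800000000000 → Odd n →
      ∃ a b c : ℕ, a.Prime ∧ b.Prime ∧ c.Prime ∧ a + b + c = n :=
  ternary_goldbach_up_to_T_general hbin m hm p hprime hgap hfirst hlast
end
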